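/- Let α ∈ (0,1) and let ν(dz) = 1_{z ∈ ℝ_+^d, |z| ≤ 1} |z|^{−d−α} dz. Then ν is a Lévy measure on ℝ_+^d with ∫ (1 ∧ |z|) ν(dz) < ∞, and there exist constants c, C > 0 such that c |λ|^α ≤ ∫_{ℝ_+^d} (1 − cos(λ·z)) ν(dz) ≤ C |λ|^α for all λ ∈ ℝ^d with |λ| ≥ 1. -/

import Mathlib

/-!
Write `s = d + α` and `ψ(l) = ∫_{ℝ₊ᵈ ∩ B₁} |z|^{-s} (1 - cos(l·z)) dz`, with `|·|` the sup norm.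

Upper bound: `1 - cos(l·z) ≤ 2d² min(1, |‖l‖ z|²)`, and the substitution `z ↦ ‖l‖ z` turns
`∫ |z|^{-s} min(1, |‖l‖ z|²) dz` into `‖l‖^{s-d} ∫ |w|^{-s} min(1, |w|²) dw`; the last integral is
finite because `s < d + 2` near the origin and `s > d` at infinity.

Lower bound: if `|l_i| = ‖l‖`, then on the box of side `(4d‖l‖)⁻¹` with corner `(2‖l‖)⁻¹ eᵢ` the
phase `l·z` stays in `[1/4, 3/4]`, away from `2πℤ`, while `|z|^{-s} ≥ ‖l‖^s`; the box has volume
`(4d‖l‖)^{-d}`.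
-/

open MeasureTheory Finset Set Metric Real Module

lemma rpow_neg_le_two_rpow_mul_one_add_rpow_neg {s t : ℝ} (hs : 0 ≤ s) (ht : 1 ≤ t) :
    t ^ (-s) ≤ 2 ^ s * (1 + t) ^ (-s) := by
  have ht0 : 0 < t := one_pos.trans_le ht
  calc t ^ (-s) = 2 ^ s * (2 * t) ^ (-s) := by
        rw [mul_rpow zero_le_two ht0.le, ← mul_assoc, ← rpow_add two_pos, add_neg_cancel,
          rpow_zero, one_mul]
    _ ≤ 2 ^ s * (1 + t) ^ (-s) := mul_le_mul_of_nonneg_left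
        (rpow_le_rpow_of_nonpos (by positivity) (by linarith) (neg_nonpos.2 hs)) (by positivity)

lemma one_sub_cos_le_two_mul_min_one_sq (x : ℝ) : 1 - cos x ≤ 2 * min 1 (x ^ 2) := by
  rw [mul_min_of_nonneg _ _ zero_le_two]
  exact le_min (by linarith [neg_one_le_cos x])
    (by nlinarith [one_sub_sq_div_two_le_cos (x := x), sq_nonneg x])

lemma one_sub_cos_le_one_sub_cos_of_le_abs {a x : ℝ} (ha : 0 ≤ a) (hax : a ≤ |x|)
    (hx : |x| ≤ π) : 1 - cos a ≤ 1 - cos x := by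
  rw [← cos_abs x]
  linarith [cos_le_cos_of_nonneg_of_le_pi ha hx hax]

lemma one_sub_cos_quarter_pos : 0 < 1 - cos (1 / 4) := by
  have := cos_lt_cos_of_nonneg_of_le_pi le_rfl (by linarith [pi_gt_three])
    (by norm_num : (0 : ℝ) < 1 / 4)
  rw [cos_zero] at this
  linarith

section RadialIntegrals

variable {E : Type*} [NormedAddCommGroup E] [NormedSpace ℝ E]

lemma rpow_neg_norm_mul_eq_rpow_mul_smul {s L : ℝ} (hL : 0 < L) (g : E → ℝ) (x : E) :
    ‖x‖ ^ (-s) * g (L • x) = L ^ s * (‖L • x‖ ^ (-s) * g (L • x)) := by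
  rw [norm_smul, Real.norm_of_nonneg hL.le, mul_rpow hL.le (norm_nonneg _), rpow_neg hL.le,
    ← mul_assoc, ← mul_assoc, mul_inv_cancel₀ (rpow_pos_of_pos hL s).ne', one_mul]

variable [FiniteDimensional ℝ E] [MeasurableSpace E] [BorelSpace E] {μ : Measure E}
  [μ.IsAddHaarMeasure]

theorem integrable_rpow_neg_norm_mul_min_one_rpow_norm [Nontrivial E] {s p : ℝ}
    (hs : finrank ℝ E < s) (hsp : s < finrank ℝ E + p) :
    Integrable (fun x : E => ‖x‖ ^ (-s) * min 1 (‖x‖ ^ p)) μ := by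
  have hs0 : 0 < s := (Nat.cast_nonneg _).trans_lt hs
  have hp : 0 < p := by linarith
  have hmeas : AEStronglyMeasurable (fun x : E => ‖x‖ ^ (-s) * min 1 (‖x‖ ^ p)) μ :=
    Measurable.aestronglyMeasurable (by fun_prop)
  rw [← integrableOn_univ, ← union_compl_self (ball (0 : E) 1)]
  refine IntegrableOn.union ?_ ?_
  · refine integrableOn_ball_of_norm_le_rpow (C := 1) (α := s - p) finrank_pos (by linarith)
      (ae_of_all _ fun x => ?_) hmeas
    rw [Real.norm_of_nonneg (by positivity), one_mul, neg_sub, sub_eq_neg_add]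
    calc ‖x‖ ^ (-s) * min 1 (‖x‖ ^ p) ≤ ‖x‖ ^ (-s) * ‖x‖ ^ p := by
          gcongr; exact min_le_right _ _
      _ ≤ ‖x‖ ^ (-s + p) := le_rpow_add (norm_nonneg _) _ _
  · refine ((integrable_one_add_norm hs).const_mul (2 ^ s)).integrableOn.mono'
      hmeas.restrict ?_
    filter_upwards [ae_restrict_mem measurableSet_ball.compl] with x hx
    have hx1 : 1 ≤ ‖x‖ := by simpa using hx
    rw [Real.norm_of_nonneg (by positivity), min_eq_left (one_le_rpow hx1 hp.le), mul_one]
    exact rpow_neg_le_two_rpow_mul_one_add_rpow_neg hs0.le hx1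

theorem integral_rpow_neg_norm_mul_min_one_rpow_norm_pos [Nontrivial E] {s p : ℝ}
    (hs : finrank ℝ E < s) (hsp : s < finrank ℝ E + p) :
    0 < ∫ x : E, ‖x‖ ^ (-s) * min 1 (‖x‖ ^ p) ∂μ := by
  refine (integral_pos_iff_support_of_nonneg (fun x => by positivity)
    (integrable_rpow_neg_norm_mul_min_one_rpow_norm hs hsp)).2 ?_
  refine (isOpen_compl_singleton.measure_pos μ (exists_ne 0)).trans_le
    (measure_mono fun x hx => ?_)
  have hx0 : 0 < ‖x‖ := norm_pos_iff.2 hx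
  exact (mul_pos (rpow_pos_of_pos hx0 _) (lt_min one_pos (rpow_pos_of_pos hx0 _))).ne'

theorem integral_rpow_neg_norm_mul_comp_smul {s L : ℝ} (hL : 0 < L) (g : E → ℝ) :
    ∫ x, ‖x‖ ^ (-s) * g (L • x) ∂μ = L ^ (s - finrank ℝ E) * ∫ x, ‖x‖ ^ (-s) * g x ∂μ := by
  simp_rw [rpow_neg_norm_mul_eq_rpow_mul_smul hL g]
  rw [integral_const_mul, Measure.integral_comp_smul_of_nonneg μ (fun x => ‖x‖ ^ (-s) * g x) L
    (hR := hL.le), smul_eq_mul, ← mul_assoc, rpow_sub hL, rpow_natCast, div_eq_mul_inv]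

theorem MeasureTheory.Integrable.rpow_neg_norm_mul_comp_smul {s L : ℝ} (hL : 0 < L)
    {g : E → ℝ} (hg : Integrable (fun x => ‖x‖ ^ (-s) * g x) μ) :
    Integrable (fun x => ‖x‖ ^ (-s) * g (L • x)) μ := by
  simp_rw [rpow_neg_norm_mul_eq_rpow_mul_smul hL g]
  exact (hg.comp_smul hL.ne').const_mul _

end RadialIntegrals

section WithDensity

variable {X : Type*} [MeasurableSpace X] {μ : Measure X} {K : Set X} {g : X → ℝ}

lemma integral_withDensity_indicator_ofReal (hK : MeasurableSet K) (hg : Measurable g)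
    (hg0 : ∀ x ∈ K, 0 ≤ g x) (f : X → ℝ) :
    ∫ x, f x ∂μ.withDensity (fun x => K.indicator (fun x => ENNReal.ofReal (g x)) x) =
      ∫ x in K, g x * f x ∂μ := by
  rw [integral_withDensity_eq_integral_toReal_smul (hg.ennreal_ofReal.indicator hK)
    (ae_of_all _ fun x => by by_cases hx : x ∈ K <;> simp [hx]), ← integral_indicator hK]
  congr 1 with x
  by_cases hx : x ∈ K <;> simp [hx, hg0]

lemma lintegral_withDensity_indicator_ofReal_lt_top (hK : MeasurableSet K) (hg : Measurable g)
    (hg0 : ∀ x ∈ K, 0 ≤ g x) {f : X → ℝ} (hf : Integrable (fun x => g x * f x) μ) :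
    ∫⁻ x, ENNReal.ofReal (f x)
      ∂μ.withDensity (fun x => K.indicator (fun x => ENNReal.ofReal (g x)) x) < ⊤ := by
  refine (lintegral_withDensity_le_lintegral_mul μ (hg.ennreal_ofReal.indicator hK) _).trans_lt
    ((lintegral_mono fun x => ?_).trans_lt hf.lintegral_lt_top)
  by_cases hx : x ∈ K
  · simp [hx, ENNReal.ofReal_mul (hg0 x hx)]
  · simp [hx]

end WithDensity

lemma Pi.exists_norm_apply_eq_norm {ι : Type*} [Fintype ι] [Nonempty ι] (l : ι → ℝ) :
    ∃ i, ‖l i‖ = ‖l‖ := by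
  obtain ⟨i, -, hi⟩ := Finset.exists_mem_eq_sup Finset.univ Finset.univ_nonempty fun j => ‖l j‖₊
  exact ⟨i, by rw [Pi.norm_def, hi]; rfl⟩

section CoordinateSpace

variable {d : ℕ}

lemma abs_sum_mul_le (l z : Fin d → ℝ) : |∑ i, l i * z i| ≤ d * (‖l‖ * ‖z‖) :=
  calc |∑ i, l i * z i| ≤ ∑ i, |l i * z i| := abs_sum_le_sum_abs _ _
    _ ≤ ∑ _i : Fin d, ‖l‖ * ‖z‖ := sum_le_sum fun i _ => by
        rw [abs_mul]
        exact mul_le_mul (norm_le_pi_norm l i) (norm_le_pi_norm z i) (abs_nonneg _)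
          (norm_nonneg _)
    _ = d * (‖l‖ * ‖z‖) := by simp

lemma one_sub_cos_sum_mul_le (hd : 0 < d) (l z : Fin d → ℝ) :
    1 - cos (∑ i, l i * z i) ≤ 2 * d ^ 2 * min 1 (‖‖l‖ • z‖ ^ 2) := by
  have hd1 : (1 : ℝ) ≤ d ^ 2 := one_le_pow₀ (by exact_mod_cast hd)
  have hsq : (∑ i, l i * z i) ^ 2 ≤ d ^ 2 * ‖‖l‖ • z‖ ^ 2 := by
    rw [norm_smul, norm_norm, ← mul_pow, ← sq_abs]
    exact pow_le_pow_left₀ (abs_nonneg _) (abs_sum_mul_le l z) 2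
  calc 1 - cos (∑ i, l i * z i) ≤ 2 * min 1 ((∑ i, l i * z i) ^ 2) :=
        one_sub_cos_le_two_mul_min_one_sq _
    _ ≤ 2 * min ((d : ℝ) ^ 2) (d ^ 2 * ‖‖l‖ • z‖ ^ 2) := by gcongr
    _ = 2 * d ^ 2 * min 1 (‖‖l‖ • z‖ ^ 2) := by
        rw [mul_assoc, mul_min_of_nonneg 1 _ (by positivity : (0 : ℝ) ≤ d ^ 2), mul_one]

lemma rpow_neg_norm_mul_one_sub_cos_le (hd : 0 < d) (s : ℝ) (l z : Fin d → ℝ) :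
    ‖z‖ ^ (-s) * (1 - cos (∑ i, l i * z i)) ≤
      2 * d ^ 2 * (‖z‖ ^ (-s) * min 1 (‖‖l‖ • z‖ ^ 2)) := by
  rw [mul_left_comm]
  exact mul_le_mul_of_nonneg_left (one_sub_cos_sum_mul_le hd l z) (by positivity)

def openBox (a : Fin d → ℝ) (δ : ℝ) : Set (Fin d → ℝ) :=
  Set.univ.pi fun j => Ioo (a j) (a j + δ)

lemma volume_openBox (a : Fin d → ℝ) (δ : ℝ) :
    volume (openBox a δ) = ENNReal.ofReal δ ^ d := by
  simp [openBox, Real.volume_pi_Ioo]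

lemma norm_sub_le_of_mem_openBox {a z : Fin d → ℝ} {δ : ℝ} (hδ : 0 ≤ δ)
    (hz : z ∈ openBox a δ) : ‖z - a‖ ≤ δ := by
  refine (pi_norm_le_iff_of_nonneg hδ).2 fun j => ?_
  have := hz j (mem_univ j)
  rw [Pi.sub_apply, Real.norm_of_nonneg (by linarith [this.1])]
  linarith [this.2]

lemma bounds_of_mem_openBox (hd : 0 < d) {l : Fin d → ℝ} (hL : 0 < ‖l‖) {i : Fin d}
    (hi : ‖l i‖ = ‖l‖) {z : Fin d → ℝ}
    (hz : z ∈ openBox (Pi.single i (2 * ‖l‖)⁻¹) (4 * d * ‖l‖)⁻¹) :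
    (∀ j, 0 ≤ z j) ∧ 0 < ‖z‖ ∧ ‖z‖ ≤ ‖l‖⁻¹ ∧
      1 / 4 ≤ |∑ j, l j * z j| ∧ |∑ j, l j * z j| ≤ 3 / 4 := by
  set L := ‖l‖
  set a : Fin d → ℝ := Pi.single i (2 * L)⁻¹
  have hd1 : (1 : ℝ) ≤ d := by exact_mod_cast hd
  have hδ : (4 * d * L)⁻¹ ≤ (4 * L)⁻¹ := by gcongr; nlinarith
  have hza : ‖z - a‖ ≤ (4 * d * L)⁻¹ := norm_sub_le_of_mem_openBox (by positivity) hz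
  have ha : ‖a‖ = (2 * L)⁻¹ := by simp [a, Pi.norm_single, hL.le]
  have hla : |∑ j, l j * a j| = 1 / 2 := by
    have hsum : ∑ j, l j * a j = l i * (2 * L)⁻¹ := by simp [a, Pi.single_apply]
    rw [hsum, abs_mul, ← Real.norm_eq_abs, hi, abs_of_pos (by positivity)]
    field_simp
  have hlz : |∑ j, l j * z j - ∑ j, l j * a j| ≤ 1 / 4 := by
    rw [← sum_sub_distrib]
    simp_rw [← mul_sub]
    calc |∑ j, l j * (z - a) j| ≤ d * (L * ‖z - a‖) := abs_sum_mul_le l (z - a)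
      _ ≤ d * (L * (4 * d * L)⁻¹) := by gcongr
      _ = 1 / 4 := by field_simp
  refine ⟨fun j => ?_, ?_, ?_, ?_, ?_⟩
  · have : 0 ≤ a j := by simp [a, Pi.single_apply]; split_ifs <;> positivity
    linarith [(hz j (mem_univ j)).1]
  · have := norm_sub_norm_le a z
    rw [norm_sub_rev] at this
    have : (4 * L)⁻¹ < (2 * L)⁻¹ := by gcongr; linarith
    linarith
  · have := norm_le_norm_add_norm_sub' z a
    have : (2 * L)⁻¹ + (4 * L)⁻¹ ≤ L⁻¹ := by field_simp; linarith
    linarith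
  · linarith [abs_sub_abs_le_abs_sub (∑ j, l j * a j) (∑ j, l j * z j),
      abs_sub_comm (∑ j, l j * a j) (∑ j, l j * z j)]
  · linarith [abs_sub_abs_le_abs_sub (∑ j, l j * z j) (∑ j, l j * a j)]

def nonnegUnitBall (d : ℕ) : Set (Fin d → ℝ) := {z | (∀ i, 0 ≤ z i) ∧ ‖z‖ ≤ 1}

lemma measurableSet_nonnegUnitBall : MeasurableSet (nonnegUnitBall d) := by
  unfold nonnegUnitBall
  measurability

lemma integrable_rpow_neg_norm_mul_min_one_sq (hd : 0 < d) {s : ℝ} (hs : d < s)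
    (hs2 : s < d + 2) : Integrable (fun z : Fin d → ℝ => ‖z‖ ^ (-s) * min 1 (‖z‖ ^ 2)) := by
  have : Nonempty (Fin d) := ⟨⟨0, hd⟩⟩
  simpa only [rpow_two] using integrable_rpow_neg_norm_mul_min_one_rpow_norm (μ := volume)
    (s := s) (p := 2) (by rwa [finrank_fin_fun]) (by rwa [finrank_fin_fun])

lemma integrable_rpow_neg_norm_mul_one_sub_cos (hd : 0 < d) {s : ℝ} (hs : d < s)
    (hs2 : s < d + 2) {l : Fin d → ℝ} (hL : 0 < ‖l‖) :
    Integrable (fun z : Fin d → ℝ => ‖z‖ ^ (-s) * (1 - cos (∑ i, l i * z i))) := by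
  refine (((integrable_rpow_neg_norm_mul_min_one_sq hd hs hs2).rpow_neg_norm_mul_comp_smul
    hL).const_mul (2 * d ^ 2)).mono' (Measurable.aestronglyMeasurable (by fun_prop))
    (ae_of_all _ fun z => ?_)
  rw [Real.norm_of_nonneg (mul_nonneg (by positivity)
    (by linarith [cos_le_one (∑ i, l i * z i)]))]
  exact rpow_neg_norm_mul_one_sub_cos_le hd s l z

theorem le_setIntegral_nonnegUnitBall_one_sub_cos (hd : 0 < d) {s : ℝ} (hs : 0 ≤ s)
    {l : Fin d → ℝ} (hl : 1 ≤ ‖l‖) (hint : IntegrableOn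
      (fun z => ‖z‖ ^ (-s) * (1 - cos (∑ i, l i * z i))) (nonnegUnitBall d)) :
    (1 - cos (1 / 4)) * (4 * (d : ℝ))⁻¹ ^ d * ‖l‖ ^ (s - d) ≤
      ∫ z in nonnegUnitBall d, ‖z‖ ^ (-s) * (1 - cos (∑ i, l i * z i)) := by
  have : Nonempty (Fin d) := ⟨⟨0, hd⟩⟩
  have hL : 0 < ‖l‖ := one_pos.trans_le hl
  obtain ⟨i, hi⟩ := Pi.exists_norm_apply_eq_norm l
  set B := openBox (Pi.single i (2 * ‖l‖)⁻¹) (4 * d * ‖l‖)⁻¹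
  have hBK : B ⊆ nonnegUnitBall d := fun z hz => by
    obtain ⟨hz0, -, hzL, -⟩ := bounds_of_mem_openBox hd hL hi hz
    exact ⟨hz0, hzL.trans (inv_le_one_of_one_le₀ hl)⟩
  have hpt : ∀ z ∈ B,
      ‖l‖ ^ s * (1 - cos (1 / 4)) ≤ ‖z‖ ^ (-s) * (1 - cos (∑ i, l i * z i)) := by
    intro z hz
    obtain ⟨-, hz0, hzL, hlz, hlz'⟩ := bounds_of_mem_openBox hd hL hi hz
    refine mul_le_mul ?_ (one_sub_cos_le_one_sub_cos_of_le_abs (by norm_num) hlz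
      (by linarith [pi_gt_three])) (by linarith [cos_le_one (1 / 4)]) (by positivity)
    calc ‖l‖ ^ s = ‖l‖⁻¹ ^ (-s) := by rw [rpow_neg (inv_nonneg.2 hL.le), inv_rpow hL.le, inv_inv]
      _ ≤ ‖z‖ ^ (-s) := rpow_le_rpow_of_nonpos hz0 hzL (neg_nonpos.2 hs)
  calc (1 - cos (1 / 4)) * (4 * (d : ℝ))⁻¹ ^ d * ‖l‖ ^ (s - d)
      = ∫ _ in B, ‖l‖ ^ s * (1 - cos (1 / 4)) := by
        rw [setIntegral_const, measureReal_def, volume_openBox, ENNReal.toReal_pow,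
          ENNReal.toReal_ofReal (by positivity), smul_eq_mul, rpow_sub hL, rpow_natCast,
          mul_inv (4 * (d : ℝ)), mul_pow, inv_pow ‖l‖]
        field_simp
    _ ≤ ∫ z in B, ‖z‖ ^ (-s) * (1 - cos (∑ i, l i * z i)) :=
        setIntegral_mono_on (integrableOn_const (by
            rw [volume_openBox]; exact ENNReal.pow_ne_top ENNReal.ofReal_ne_top))
          (hint.mono_set hBK) (MeasurableSet.univ_pi fun _ => measurableSet_Ioo) hpt
    _ ≤ ∫ z in nonnegUnitBall d, ‖z‖ ^ (-s) * (1 - cos (∑ i, l i * z i)) :=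
        setIntegral_mono_set hint (ae_of_all _ fun z =>
          mul_nonneg (by positivity) (by linarith [cos_le_one (∑ i, l i * z i)]))
          hBK.eventuallyLE

theorem setIntegral_nonnegUnitBall_one_sub_cos_le (hd : 0 < d) {s : ℝ} (hs : d < s)
    (hs2 : s < d + 2) {l : Fin d → ℝ} (hL : 0 < ‖l‖) :
    ∫ z in nonnegUnitBall d, ‖z‖ ^ (-s) * (1 - cos (∑ i, l i * z i)) ≤
      2 * d ^ 2 * (∫ z : Fin d → ℝ, ‖z‖ ^ (-s) * min 1 (‖z‖ ^ 2)) * ‖l‖ ^ (s - d) := by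
  have hnonneg : ∀ z : Fin d → ℝ, 0 ≤ ‖z‖ ^ (-s) * (1 - cos (∑ i, l i * z i)) := fun z =>
    mul_nonneg (by positivity) (by linarith [cos_le_one (∑ i, l i * z i)])
  calc ∫ z in nonnegUnitBall d, ‖z‖ ^ (-s) * (1 - cos (∑ i, l i * z i))
      ≤ ∫ z : Fin d → ℝ, ‖z‖ ^ (-s) * (1 - cos (∑ i, l i * z i)) :=
        setIntegral_le_integral (integrable_rpow_neg_norm_mul_one_sub_cos hd hs hs2 hL)
          (ae_of_all _ hnonneg)
    _ ≤ ∫ z : Fin d → ℝ, 2 * d ^ 2 * (‖z‖ ^ (-s) * min 1 (‖‖l‖ • z‖ ^ 2)) :=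
        integral_mono_of_nonneg (ae_of_all _ hnonneg)
          (((integrable_rpow_neg_norm_mul_min_one_sq hd hs hs2).rpow_neg_norm_mul_comp_smul
            hL).const_mul (2 * d ^ 2))
          (ae_of_all _ (rpow_neg_norm_mul_one_sub_cos_le hd s l))
    _ = 2 * d ^ 2 * (∫ z : Fin d → ℝ, ‖z‖ ^ (-s) * min 1 (‖z‖ ^ 2)) * ‖l‖ ^ (s - d) := by
        rw [integral_const_mul, integral_rpow_neg_norm_mul_comp_smul hL fun z => min 1 (‖z‖ ^ 2),
          finrank_fin_fun]
        ring

end CoordinateSpace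

/-- For `α ∈ (0,1)`, the measure
`ν(dz) = 1_{z ∈ ℝ_+^d, |z| ≤ 1} |z|^{−d−α} dz` is a Lévy measure on `ℝ_+^d` with
`∫ (1 ∧ |z|) dν < ∞`, and there are `c, C > 0` with
`c|λ|^α ≤ ∫ (1 − cos(λ·z)) dν ≤ C|λ|^α` for all `|λ| ≥ 1`. -/
theorem stmt_18 (d : ℕ) (hd : 0 < d) (α : ℝ) (hα : α ∈ Set.Ioo (0 : ℝ) 1)
    (ν : Measure (Fin d → ℝ))
    (hν : ν = (volume : Measure (Fin d → ℝ)).withDensity fun z =>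
      Set.indicator {z : Fin d → ℝ | (∀ i, 0 ≤ z i) ∧ ‖z‖ ≤ 1}
        (fun z => ENNReal.ofReal (‖z‖ ^ (-(d : ℝ) - α))) z) :
    ν {0} = 0 ∧ (∫⁻ z, ENNReal.ofReal (min 1 ‖z‖) ∂ν) < ⊤ ∧
    ∃ c > (0 : ℝ), ∃ C > (0 : ℝ), ∀ l : Fin d → ℝ, 1 ≤ ‖l‖ →
      c * ‖l‖ ^ α ≤ ∫ z, (1 - Real.cos (∑ i, l i * z i)) ∂ν ∧
      (∫ z, (1 - Real.cos (∑ i, l i * z i)) ∂ν) ≤ C * ‖l‖ ^ α := by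
  subst hν
  obtain ⟨hα0, hα1⟩ := hα
  have : Nonempty (Fin d) := ⟨⟨0, hd⟩⟩
  have hexp : -(d : ℝ) - α = -(d + α) := by ring
  have hK : {z : Fin d → ℝ | (∀ i, 0 ≤ z i) ∧ ‖z‖ ≤ 1} = nonnegUnitBall d := rfl
  have hs : (d : ℝ) < d + α := by linarith
  have hg : Measurable fun z : Fin d → ℝ => ‖z‖ ^ (-((d : ℝ) + α)) := by fun_prop
  have hg0 : ∀ z ∈ nonnegUnitBall d, 0 ≤ ‖z‖ ^ (-((d : ℝ) + α)) := fun z _ => by positivity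
  rw [hexp, hK]
  refine ⟨withDensity_absolutelyContinuous _ _ (measure_singleton 0),
    lintegral_withDensity_indicator_ofReal_lt_top measurableSet_nonnegUnitBall hg hg0 ?_,
    (1 - cos (1 / 4)) * (4 * (d : ℝ))⁻¹ ^ d, mul_pos one_sub_cos_quarter_pos (by positivity),
    2 * d ^ 2 * ∫ z : Fin d → ℝ, ‖z‖ ^ (-((d : ℝ) + α)) * min 1 (‖z‖ ^ 2), ?_,
    fun l hl => ?_⟩
  · simpa only [rpow_one] using integrable_rpow_neg_norm_mul_min_one_rpow_norm (μ := volume)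
      (p := 1) (by rwa [finrank_fin_fun]) (by rw [finrank_fin_fun]; linarith)
  · simpa only [rpow_two] using mul_pos (by positivity)
      (integral_rpow_neg_norm_mul_min_one_rpow_norm_pos (μ := volume) (p := 2)
        (by rwa [finrank_fin_fun]) (by rw [finrank_fin_fun]; linarith))
  · have hL : 0 < ‖l‖ := one_pos.trans_le hl
    have hlow := le_setIntegral_nonnegUnitBall_one_sub_cos hd (by positivity) hl
      (integrable_rpow_neg_norm_mul_one_sub_cos hd hs (by linarith) hL).integrableOn
    have hup := setIntegral_nonnegUnitBall_one_sub_cos_le hd hs (by linarith) hL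
    rw [add_sub_cancel_left] at hlow hup
    rw [integral_withDensity_indicator_ofReal measurableSet_nonnegUnitBall hg hg0]
    exact ⟨hlow, hup⟩
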